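/- arXiv:2204.01908 — 4 statements merged into one kernel-verified Lean document; each statement's English description precedes it below -/
import Mathlib

section
/- For every vertex v of the infinite hexagonal grid there exist three one-way infinite paths P^1, P^2, P^3, each starting at v (write P^j as the sequence v = p^j_0, p^j_1, p^j_2, …), such that for all distinct j, j' ∈ {1,2,3} and every i ≥ 0, the graph distance in the hexagonal grid between p^j_i and p^{j'}_i is at least i. -/
/- Distance-restricted firefighter game (Burgess, Marcoux, Pike, arXiv:2204.01908).

At time 0 a fire breaks out at the set `F` of vertices and each firefighter is placed on
(protects) a vertex not in `F`.  At each subsequent time step the fire spreads to every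
unburnt, unprotected neighbour of a burning vertex, and then each firefighter moves to a
vertex at distance at most `d` from its current vertex in the subgraph induced by the
unburnt vertices (i.e. along a walk of length ≤ `d` through unburnt vertices).
Occupied vertices are protected forever.  The fire is contained if the burnt set
stabilizes after finitely many steps. -/

namespace Firefight

variable {V : Type*}

/-- There is a walk in `G` from `u` to `v` of length at most `d` all of whose vertices
(including the endpoints) lie in `S`. -/
def ReachWithin (G : SimpleGraph V) (S : Set V) (d : ℕ) (u v : V) : Prop :=
  ∃ p : G.Walk u v, p.length ≤ d ∧ ∀ x ∈ p.support, x ∈ S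

/-- The set of burnt vertices at each time: `F` is the set initially on fire, and
`prot t` is the set of vertices that are protected when the fire spreads at step `t+1`. -/
def burnt (G : SimpleGraph V) (F : Set V) (prot : ℕ → Set V) : ℕ → Set V
  | 0 => F
  | t + 1 => burnt G F prot t ∪ {v | v ∉ prot t ∧ ∃ w ∈ burnt G F prot t, G.Adj w v}

/-- The set of vertices protected by time `t`: all vertices occupied by some firefighter
at some time `s ≤ t`, where `pos s i` is the vertex occupied by firefighter `i` at time `s`. -/
def protOf {k : ℕ} (pos : ℕ → Fin k → V) (t : ℕ) : Set V :=
  {v | ∃ s ≤ t, ∃ i, pos s i = v}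

/-- `k` firefighters, each moving distance at most `d` per turn within the unburnt subgraph,
can contain a fire starting at `F`, the burnt set stabilizing by time `T`. -/
def CanContainIn (G : SimpleGraph V) (d k : ℕ) (F : Set V) (T : ℕ) : Prop :=
  ∃ pos : ℕ → Fin k → V,
    (∀ i, pos 0 i ∉ F) ∧
    (∀ t i, ReachWithin G (burnt G F (protOf pos) (t + 1))ᶜ d (pos t i) (pos (t + 1) i)) ∧
    ∀ t, burnt G F (protOf pos) t ⊆ burnt G F (protOf pos) T

/-- `k` firefighters, each moving distance at most `d` per turn within the unburnt subgraph,
can contain a fire starting at `F`. -/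
def CanContain (G : SimpleGraph V) (d k : ℕ) (F : Set V) : Prop :=
  ∃ T, CanContainIn G d k F T

/-- The distance-restricted firefighter number `f_d(G,u)`: the least number of firefighters
that can contain a fire starting at `u` in the distance-`d` game. -/
noncomputable def fdNum (G : SimpleGraph V) (d : ℕ) (u : V) : ℕ :=
  sInf {k | CanContain G d k {u}}

/-- The infinite hexagonal grid: vertex set `ℤ × ℤ`, with `(x,y)` adjacent to `(x±1,y)`
for all `x, y`, and `(x,y)` adjacent to `(x,y+1)` exactly when `x + y` is even. -/
def hexGrid : SimpleGraph (ℤ × ℤ) :=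
  SimpleGraph.fromRel (fun p q =>
    (p.2 = q.2 ∧ |p.1 - q.1| = 1) ∨ (p.1 = q.1 ∧ Even (p.1 + p.2) ∧ q.2 = p.2 + 1))

/-! Take the two horizontal rays from `v = (x, y)` and the staircase that leaves `v` along its
vertical edge and then alternates steps to the right with vertical steps in the same direction
`s = ±1`. At time `i` they are at `(x - i, y)`, `(x + i, y)` and `(x + ⌊i/2⌋, y + s⌈i/2⌉)`,
pairwise at ℓ¹-distance at least `i`; and distance in the hexagonal grid dominates ℓ¹-distance,
since every edge changes one coordinate by one. -/

lemma reachable_of_adj_succ {G : SimpleGraph V} {f : ℕ → V}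
    (hf : ∀ i, G.Adj (f i) (f (i + 1))) : ∀ i, G.Reachable (f 0) (f i)
  | 0 => .rfl
  | i + 1 => (reachable_of_adj_succ hf i).trans (hf i).reachable

def l1Dist (u w : ℤ × ℤ) : ℕ := (u.1 - w.1).natAbs + (u.2 - w.2).natAbs

lemma l1Dist_comm (u w : ℤ × ℤ) : l1Dist u w = l1Dist w u := by
  simp only [l1Dist]; omega

lemma l1Dist_eq_one_of_adj {u w : ℤ × ℤ} (h : hexGrid.Adj u w) : l1Dist u w = 1 := by
  obtain ⟨-, h | h⟩ := h <;> rcases h with ⟨h₁, h₂⟩ | ⟨h₁, -, h₂⟩ <;>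
    simp only [l1Dist, Int.abs_eq_natAbs] at * <;> omega

lemma l1Dist_le_length {u w : ℤ × ℤ} (p : hexGrid.Walk u w) : l1Dist u w ≤ p.length := by
  induction p with
  | nil => simp [l1Dist]
  | cons h _ ih =>
    have := l1Dist_eq_one_of_adj h
    simp only [l1Dist, SimpleGraph.Walk.length_cons] at *
    omega

lemma l1Dist_le_dist {u w : ℤ × ℤ} (h : hexGrid.Reachable u w) :
    l1Dist u w ≤ hexGrid.dist u w := by
  obtain ⟨p, hp⟩ := h.exists_walk_length_eq_dist
  exact hp ▸ l1Dist_le_length p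

lemma hexGrid_adj_right (x y : ℤ) : hexGrid.Adj (x, y) (x + 1, y) :=
  (SimpleGraph.fromRel_adj _ _ _).2 ⟨by simp, Or.inl (Or.inl ⟨rfl, by simp⟩)⟩

/-- `(u.1, u.2 + vertDir u)` is the unique vertical neighbour of `u`. -/
def vertDir (u : ℤ × ℤ) : ℤ := if Even (u.1 + u.2) then 1 else -1

lemma vertDir_eq_one_or_neg_one (u : ℤ × ℤ) : vertDir u = 1 ∨ vertDir u = -1 := by
  unfold vertDir; split_ifs <;> simp

lemma natAbs_vertDir_mul (u : ℤ × ℤ) (n : ℤ) : (vertDir u * n).natAbs = n.natAbs := by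
  rcases vertDir_eq_one_or_neg_one u with h | h <;> simp [h]

lemma hexGrid_adj_vertDir (u : ℤ × ℤ) : hexGrid.Adj u (u.1, u.2 + vertDir u) := by
  unfold vertDir
  split_ifs with h
  · exact (SimpleGraph.fromRel_adj _ _ _).2 ⟨by simp [Prod.ext_iff], Or.inl (Or.inr ⟨rfl, h, rfl⟩)⟩
  · refine (SimpleGraph.fromRel_adj _ _ _).2 ⟨by simp [Prod.ext_iff], Or.inr (Or.inr ⟨rfl, ?_, ?_⟩)⟩
    · simpa [← sub_eq_add_neg, ← add_sub_assoc, Int.even_sub_one] using h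
    · simp

lemma vertDir_add_of_even {u : ℤ × ℤ} {a b : ℤ} (h : Even (a + b)) :
    vertDir (u.1 + a, u.2 + b) = vertDir u := by
  have : Even (u.1 + a + (u.2 + b)) ↔ Even (u.1 + u.2) := by
    rw [show u.1 + a + (u.2 + b) = u.1 + u.2 + (a + b) by ring, Int.even_add]
    simp [h]
  simp only [vertDir, this]

def leftRay (v : ℤ × ℤ) (i : ℕ) : ℤ × ℤ := (v.1 - i, v.2)

def rightRay (v : ℤ × ℤ) (i : ℕ) : ℤ × ℤ := (v.1 + i, v.2)

def staircase (v : ℤ × ℤ) (i : ℕ) : ℤ × ℤ :=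
  (v.1 + (i / 2 : ℕ), v.2 + vertDir v * ((i + 1) / 2 : ℕ))

lemma leftRay_adj (v : ℤ × ℤ) (i : ℕ) : hexGrid.Adj (leftRay v i) (leftRay v (i + 1)) := by
  simpa [leftRay, sub_add_eq_sub_sub] using (hexGrid_adj_right (v.1 - i - 1) v.2).symm

lemma rightRay_adj (v : ℤ × ℤ) (i : ℕ) : hexGrid.Adj (rightRay v i) (rightRay v (i + 1)) := by
  simpa [rightRay, add_assoc] using hexGrid_adj_right (v.1 + i) v.2

lemma staircase_two_mul (v : ℤ × ℤ) (k : ℕ) :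
    staircase v (2 * k) = (v.1 + k, v.2 + vertDir v * k) := by
  simp [staircase, show (2 * k + 1) / 2 = k by omega]

lemma staircase_two_mul_add_one (v : ℤ × ℤ) (k : ℕ) :
    staircase v (2 * k + 1) = (v.1 + k, v.2 + vertDir v * k + vertDir v) := by
  simp [staircase, show (2 * k + 1) / 2 = k by omega, show (2 * k + 1 + 1) / 2 = k + 1 by omega,
    mul_add, add_assoc]

lemma staircase_adj (v : ℤ × ℤ) (i : ℕ) :
    hexGrid.Adj (staircase v i) (staircase v (i + 1)) := by
  obtain ⟨k, rfl | rfl⟩ := Nat.even_or_odd' i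
  · have hdir : vertDir (v.1 + k, v.2 + vertDir v * k) = vertDir v :=
      vertDir_add_of_even <| by rcases vertDir_eq_one_or_neg_one v with h | h <;> simp [h]
    rw [staircase_two_mul, staircase_two_mul_add_one]
    simpa only [hdir] using hexGrid_adj_vertDir (v.1 + k, v.2 + vertDir v * k)
  · rw [staircase_two_mul_add_one, show 2 * k + 1 + 1 = 2 * (k + 1) by ring, staircase_two_mul]
    convert hexGrid_adj_right (v.1 + k) (v.2 + vertDir v * k + vertDir v) using 2 <;>
      push_cast <;> ring

lemma leftRay_injective (v : ℤ × ℤ) : Function.Injective (leftRay v) := by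
  intro i j h
  simp only [leftRay, Prod.mk.injEq] at h
  omega

lemma rightRay_injective (v : ℤ × ℤ) : Function.Injective (rightRay v) := by
  intro i j h
  simp only [rightRay, Prod.mk.injEq] at h
  omega

lemma staircase_injective (v : ℤ × ℤ) : Function.Injective (staircase v) := by
  intro i j h
  simp only [staircase, Prod.mk.injEq] at h
  rcases vertDir_eq_one_or_neg_one v with hv | hv <;> rw [hv] at h <;> omega

lemma le_l1Dist_leftRay_rightRay (v : ℤ × ℤ) (i : ℕ) :
    i ≤ l1Dist (leftRay v i) (rightRay v i) := by
  simp only [l1Dist, leftRay, rightRay]; omega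

lemma le_l1Dist_leftRay_staircase (v : ℤ × ℤ) (i : ℕ) :
    i ≤ l1Dist (leftRay v i) (staircase v i) := by
  simp only [l1Dist, leftRay, staircase, sub_add_cancel_left, Int.natAbs_neg, natAbs_vertDir_mul]
  omega

lemma le_l1Dist_rightRay_staircase (v : ℤ × ℤ) (i : ℕ) :
    i ≤ l1Dist (rightRay v i) (staircase v i) := by
  simp only [l1Dist, rightRay, staircase, sub_add_cancel_left, Int.natAbs_neg, natAbs_vertDir_mul]
  omega

def spreadingPaths (v : ℤ × ℤ) : Fin 3 → ℕ → ℤ × ℤ := ![leftRay v, rightRay v, staircase v]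

lemma le_l1Dist_spreadingPaths (v : ℤ × ℤ) {j j' : Fin 3} (h : j ≠ j') (i : ℕ) :
    i ≤ l1Dist (spreadingPaths v j i) (spreadingPaths v j' i) := by
  have of_lt : ∀ j j' : Fin 3, j < j' →
      i ≤ l1Dist (spreadingPaths v j i) (spreadingPaths v j' i) := by
    intro j j' h
    fin_cases j <;> fin_cases j' <;> simp only [Fin.lt_def] at h <;> try omega
    exacts [le_l1Dist_leftRay_rightRay v i, le_l1Dist_leftRay_staircase v i,
      le_l1Dist_rightRay_staircase v i]
  rcases h.lt_or_gt with h | h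
  · exact of_lt j j' h
  · exact l1Dist_comm _ _ ▸ of_lt j' j h

lemma spreadingPaths_zero (v : ℤ × ℤ) (j : Fin 3) : spreadingPaths v j 0 = v := by
  fin_cases j <;> simp [spreadingPaths, leftRay, rightRay, staircase]

lemma spreadingPaths_injective (v : ℤ × ℤ) (j : Fin 3) :
    Function.Injective (spreadingPaths v j) := by
  fin_cases j
  exacts [leftRay_injective v, rightRay_injective v, staircase_injective v]

lemma spreadingPaths_adj (v : ℤ × ℤ) (j : Fin 3) (i : ℕ) :
    hexGrid.Adj (spreadingPaths v j i) (spreadingPaths v j (i + 1)) := by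
  fin_cases j
  exacts [leftRay_adj v i, rightRay_adj v i, staircase_adj v i]

/-- For every vertex `v` of the infinite hexagonal grid there are three one-way infinite
paths `p 0, p 1, p 2` starting at `v` (injective sequences of consecutively adjacent
vertices) such that for distinct `j, j'` and every `i`, the graph distance in the
hexagonal grid between the `i`-th vertices of `p j` and `p j'` is at least `i`. -/
theorem hex_grid_three_spreading_paths (v : ℤ × ℤ) :
    ∃ p : Fin 3 → ℕ → ℤ × ℤ,
      (∀ j, p j 0 = v) ∧
      (∀ j, Function.Injective (p j)) ∧
      (∀ j i, hexGrid.Adj (p j i) (p j (i + 1))) ∧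
      (∀ j j', j ≠ j' → ∀ i : ℕ, i ≤ hexGrid.dist (p j i) (p j' i)) := by
  refine ⟨spreadingPaths v, spreadingPaths_zero v, spreadingPaths_injective v,
    spreadingPaths_adj v, fun j j' h i => ?_⟩
  have reach : ∀ j, hexGrid.Reachable v (spreadingPaths v j i) := fun j => by
    simpa only [spreadingPaths_zero] using reachable_of_adj_succ (spreadingPaths_adj v j) i
  exact (le_l1Dist_spreadingPaths v h i).trans (l1Dist_le_dist ((reach j).symm.trans (reach j')))

end Firefight
end

section
/- For every integer d ≥ 2, two firefighters suffice to contain the fire on the infinite hexagonal grid in the distance-restricted game with parameter d (and when d = 2 they can contain it within five turns); that is, f_d(G_hex) ≤ 2 for all d ≥ 2. -/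
/- Distance-restricted firefighter game (Burgess, Marcoux, Pike, arXiv:2204.01908).

At time 0 a fire breaks out at the set `F` of vertices and each firefighter is placed on
(protects) a vertex not in `F`.  At each subsequent time step the fire spreads to every
unburnt, unprotected neighbour of a burning vertex, and then each firefighter moves to a
vertex at distance at most `d` from its current vertex in the subgraph induced by the
unburnt vertices (i.e. along a walk of length ≤ `d` through unburnt vertices).
Occupied vertices are protected forever.  The fire is contained if the burnt set
stabilizes after finitely many steps. -/

namespace Firefight

variable {V : Type*}

/-!
The hexagonal grid is vertex-transitive: translations by vectors `(a, b)` with `a + b` even and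
the reflection `(x, y) ↦ (x, 1 - y)` are automorphisms, and together they move the origin to
any vertex. Containment transfers along graph isomorphisms, so it suffices to contain a fire
at the origin. There, two firefighters first guard the two unburnt neighbours of `(-1, 0)`
and then run, two edges per turn, around the upper and lower boundary of a region of sixteen
vertices, closing it off after five turns. That this works is a finite computation: on a
graph with finite neighbourhoods the burnt sets are finsets computed by a recursion mirroring
`burnt`, and the finitely many conditions to check are decided by evaluation.
-/

section Spread

variable {G : SimpleGraph V} {F : Set V} {P : ℕ → Set V}

theorem burnt_mono : Monotone (burnt G F P) :=
  monotone_nat_of_le_succ fun _ => Set.subset_union_left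

theorem burnt_subset_of_succ_subset (hP : Monotone P) {T : ℕ}
    (hT : burnt G F P (T + 1) ⊆ burnt G F P T) (t : ℕ) : burnt G F P t ⊆ burnt G F P T := by
  induction t with
  | zero => exact burnt_mono (Nat.zero_le T)
  | succ t ih =>
    rcases le_or_gt (t + 1) T with htT | hTt
    · exact burnt_mono htT
    · rintro v (hv | ⟨hvP, w, hw, hwv⟩)
      · exact ih hv
      · exact hT (Or.inr ⟨fun h => hvP (hP (Nat.lt_succ_iff.mp hTt) h), w, ih hw, hwv⟩)

end Spread

theorem protOf_mono {k : ℕ} (pos : ℕ → Fin k → V) : Monotone (protOf pos) := by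
  rintro s t hst v ⟨r, hr, i, rfl⟩
  exact ⟨r, hr.trans hst, i, rfl⟩

section Reach

variable {G : SimpleGraph V} {S : Set V}

theorem ReachWithin.refl {d : ℕ} {v : V} (hv : v ∈ S) : ReachWithin G S d v v :=
  ⟨.nil, Nat.zero_le d, by simpa using hv⟩

theorem ReachWithin.of_adj_adj {u w v : V} (huw : G.Adj u w) (hwv : G.Adj w v) (hu : u ∈ S)
    (hw : w ∈ S) (hv : v ∈ S) : ReachWithin G S 2 u v :=
  ⟨.cons huw (.cons hwv .nil), le_rfl, by simp [hu, hw, hv]⟩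

theorem ReachWithin.mono_dist {d d' : ℕ} {u v : V} (hd : d ≤ d') :
    ReachWithin G S d u v → ReachWithin G S d' u v
  | ⟨p, hp, hS⟩ => ⟨p, hp.trans hd, hS⟩

end Reach

theorem CanContainIn.mono_dist {G : SimpleGraph V} {d d' k T : ℕ} {F : Set V} (hd : d ≤ d') :
    CanContainIn G d k F T → CanContainIn G d' k F T
  | ⟨pos, h0, hmove, hT⟩ => ⟨pos, h0, fun t i => (hmove t i).mono_dist hd, hT⟩

section Iso

variable {W : Type*} {G : SimpleGraph V} {G' : SimpleGraph W}

theorem ReachWithin.map (f : G →g G') {S : Set V} {d : ℕ} {u v : V} :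
    ReachWithin G S d u v → ReachWithin G' (f '' S) d (f u) (f v)
  | ⟨p, hp, hS⟩ => ⟨p.map f, by rwa [SimpleGraph.Walk.length_map], by
      simpa [SimpleGraph.Walk.support_map] using fun x hx => ⟨x, hS x hx, rfl⟩⟩

theorem protOf_comp {k : ℕ} (f : V → W) (pos : ℕ → Fin k → V) (t : ℕ) :
    protOf (fun s i => f (pos s i)) t = f '' protOf pos t := by
  ext w
  constructor
  · rintro ⟨s, hs, i, rfl⟩
    exact ⟨pos s i, ⟨s, hs, i, rfl⟩, rfl⟩
  · rintro ⟨_, ⟨s, hs, i, rfl⟩, rfl⟩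
    exact ⟨s, hs, i, rfl⟩

theorem burnt_image (e : G ≃g G') (F : Set V) (P : ℕ → Set V) (t : ℕ) :
    burnt G' (e '' F) (fun s => e '' P s) t = e '' burnt G F P t := by
  induction t with
  | zero => rfl
  | succ t ih =>
    ext w
    obtain ⟨v, rfl⟩ := e.surjective w
    simp only [burnt, ih, Set.mem_union, Set.mem_ofPred_eq, e.injective.mem_set_image,
      e.surjective.exists, e.map_adj_iff]

theorem CanContainIn.map (e : G ≃g G') {d k T : ℕ} {F : Set V} :
    CanContainIn G d k F T → CanContainIn G' d k (e '' F) T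
  | ⟨pos, h0, hmove, hT⟩ => by
    have hprot : protOf (fun s i => e (pos s i)) = fun s => e '' protOf pos s :=
      funext (protOf_comp e pos)
    refine ⟨fun s i => e (pos s i), fun i => ?_, fun t i => ?_, fun t => ?_⟩
    · simpa using h0 i
    · rw [hprot, burnt_image, ← Set.image_compl_eq e.bijective]
      exact (hmove t i).map e.toHom
    · rw [hprot, burnt_image, burnt_image]
      exact Set.image_mono (hT t)

end Iso

section Finite

variable [DecidableEq V]

def spreadFinset (nbrs : V → Finset V) (P : ℕ → Finset V) (F : Finset V) : ℕ → Finset V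
  | 0 => F
  | t + 1 => spreadFinset nbrs P F t ∪
      ((spreadFinset nbrs P F t).biUnion nbrs).filter (· ∉ P t)

theorem burnt_eq_spreadFinset {G : SimpleGraph V} {nbrs : V → Finset V}
    (hnbrs : ∀ v w, G.Adj v w ↔ w ∈ nbrs v) (F : Finset V) (P : ℕ → Finset V) (t : ℕ) :
    burnt G F (fun s => P s) t = spreadFinset nbrs P F t := by
  induction t with
  | zero => rfl
  | succ t ih =>
    ext v
    simp [burnt, spreadFinset, ih, hnbrs, and_comm]

def protFinset {k : ℕ} (pos : ℕ → Fin k → V) (t : ℕ) : Finset V :=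
  (Finset.range (t + 1)).biUnion fun s => Finset.univ.image (pos s)

theorem protOf_eq_protFinset {k : ℕ} (pos : ℕ → Fin k → V) :
    protOf pos = fun t => (protFinset pos t : Set V) := by
  ext t v
  simp [protOf, protFinset]

end Finite

theorem hexGrid_adj (a b c d : ℤ) : hexGrid.Adj (a, b) (c, d) ↔
    b = d ∧ (c = a + 1 ∨ c = a - 1) ∨
      a = c ∧ ((a + b) % 2 = 0 ∧ d = b + 1 ∨ (c + d) % 2 = 0 ∧ b = d + 1) := by
  simp only [hexGrid, SimpleGraph.fromRel_adj, Prod.ext_iff, ne_eq, Int.even_iff,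
    Int.abs_eq_natAbs]
  omega

def hexNbrs (p : ℤ × ℤ) : Finset (ℤ × ℤ) :=
  {(p.1 + 1, p.2), (p.1 - 1, p.2), (p.1, if Even (p.1 + p.2) then p.2 + 1 else p.2 - 1)}

theorem hexGrid_adj_iff_mem_hexNbrs (p q : ℤ × ℤ) : hexGrid.Adj p q ↔ q ∈ hexNbrs p := by
  obtain ⟨a, b⟩ := p
  obtain ⟨c, d⟩ := q
  simp only [hexGrid_adj, hexNbrs, Finset.mem_insert, Finset.mem_singleton, Prod.ext_iff,
    Int.even_iff]
  split_ifs <;> omega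

def hexTranslate (c : ℤ × ℤ) (hc : Even (c.1 + c.2)) : hexGrid ≃g hexGrid :=
  ⟨Equiv.addLeft c, fun {p q} => by
    obtain ⟨c₁, c₂⟩ := c
    obtain ⟨a, b⟩ := p
    obtain ⟨x, y⟩ := q
    rw [Int.even_iff] at hc
    simp only [Equiv.coe_addLeft, Prod.mk_add_mk, hexGrid_adj]
    omega⟩

def hexFlip : hexGrid ≃g hexGrid :=
  ⟨(Equiv.refl ℤ).prodCongr (Equiv.subLeft 1), fun {p q} => by
    obtain ⟨a, b⟩ := p
    obtain ⟨c, d⟩ := q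
    simp only [Equiv.prodCongr_apply, Equiv.coe_refl, Equiv.subLeft_apply, Prod.map, id,
      hexGrid_adj]
    omega⟩

theorem hexGrid_exists_iso_apply_origin (u : ℤ × ℤ) :
    ∃ e : hexGrid ≃g hexGrid, e (0, 0) = u := by
  rcases Int.even_or_odd (u.1 + u.2) with hu | hu
  · exact ⟨hexTranslate u hu, by simp [hexTranslate]⟩
  · refine ⟨hexFlip.trans (hexTranslate (u.1, u.2 - 1) ?_), by simp [hexFlip, hexTranslate]⟩
    rw [Int.odd_iff] at hu
    rw [Int.even_iff]
    omega

/-- Firefighter `i` walks along `hexRoute i`, two edges per turn, and then stays at its end. -/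
def hexRoute : Fin 2 → Fin 11 → ℤ × ℤ :=
  ![![(-2, 0), (-2, 1), (-1, 1), (-1, 2), (0, 2), (0, 3), (1, 3), (2, 3), (3, 3), (4, 3), (4, 2)],
    ![(-1, -1), (0, -1), (1, -1), (2, -1), (3, -1), (4, -1), (5, -1), (5, 0), (6, 0), (6, 1),
      (5, 1)]]

def hexStep (j : ℕ) (i : Fin 2) : ℤ × ℤ := hexRoute i ⟨min j 10, by omega⟩

def hexPos (t : ℕ) (i : Fin 2) : ℤ × ℤ := hexStep (2 * t) i

def hexBurnt : ℕ → Finset (ℤ × ℤ) := spreadFinset hexNbrs (protFinset hexPos) {(0, 0)}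

theorem hexPos_zero_not_mem_origin : ∀ i, hexPos 0 i ∉ ({(0, 0)} : Set (ℤ × ℤ)) := by
  decide

theorem hexStep_succ_mem_hexNbrs :
    ∀ j < 10, ∀ i, hexStep (j + 1) i ∈ hexNbrs (hexStep j i) := by
  decide

theorem hexStep_not_mem_hexBurnt :
    ∀ t < 5, ∀ i, ∀ j ≤ 2, hexStep (2 * t + j) i ∉ hexBurnt (t + 1) := by
  decide

theorem hexBurnt_six_subset_five : hexBurnt 6 ⊆ hexBurnt 5 := by
  decide

theorem hexGrid_canContainIn_origin : CanContainIn hexGrid 2 2 {(0, 0)} 5 := by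
  have hburnt (t : ℕ) : burnt hexGrid {(0, 0)} (protOf hexPos) t = hexBurnt t := by
    rw [protOf_eq_protFinset]
    exact_mod_cast burnt_eq_spreadFinset hexGrid_adj_iff_mem_hexNbrs {(0, 0)} _ t
  have hstable := burnt_subset_of_succ_subset (protOf_mono hexPos) (T := 5) (by
    rw [hburnt, hburnt]
    exact_mod_cast hexBurnt_six_subset_five)
  refine ⟨hexPos, hexPos_zero_not_mem_origin, fun t i => ?_, hstable⟩
  rcases lt_or_ge t 5 with ht | ht
  · have hfree j (hj : j ≤ 2) :
        hexStep (2 * t + j) i ∈ (burnt hexGrid {(0, 0)} (protOf hexPos) (t + 1))ᶜ := by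
      simpa [hburnt] using hexStep_not_mem_hexBurnt t ht i j hj
    have hadj j (hj : j < 10) :=
      (hexGrid_adj_iff_mem_hexNbrs _ _).2 (hexStep_succ_mem_hexNbrs j hj i)
    exact .of_adj_adj (hadj (2 * t) (by omega)) (hadj (2 * t + 1) (by omega))
      (hfree 0 (by omega)) (hfree 1 (by omega)) (hfree 2 le_rfl)
  · have hpos (s : ℕ) (hs : 5 ≤ s) : hexPos s i = hexStep 10 i := by
      simp only [hexPos, hexStep]
      congr 2
      omega
    rw [hpos t ht, hpos (t + 1) (by omega)]
    refine .refl fun h => hexStep_not_mem_hexBurnt 4 (by omega) i 2 le_rfl ?_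
    simpa [hburnt] using hstable (t + 1) h

/-- For every integer `d ≥ 2`, two firefighters suffice to contain the fire on the infinite
hexagonal grid in the distance-restricted game with parameter `d` (and when `d = 2` they
can contain it within five turns): `f_d(G_hex) ≤ 2` for all `d ≥ 2`. -/
theorem hex_grid_dge2 :
    (∀ d : ℕ, 2 ≤ d → ∀ u : ℤ × ℤ, fdNum hexGrid d u ≤ 2) ∧
    (∀ u : ℤ × ℤ, CanContainIn hexGrid 2 2 {u} 5) := by
  have hcontain (u : ℤ × ℤ) : CanContainIn hexGrid 2 2 {u} 5 := by
    obtain ⟨e, rfl⟩ := hexGrid_exists_iso_apply_origin u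
    simpa using hexGrid_canContainIn_origin.map e
  exact ⟨fun d hd u => Nat.sInf_le ⟨5, (hcontain u).mono_dist hd⟩, hcontain⟩

end Firefight
end

section
/- For every integer d ≥ 1 and every positive integer N, there exist a graph G and a vertex u of G such that f_d(G,u) − f(G,u) ≥ N and f_d(G,u)/f(G,u) ≥ N; that is, the gap and ratio between the distance-restricted firefighter number and the ordinary firefighter number can be arbitrarily large for any fixed d. -/
/- Distance-restricted firefighter game (Burgess, Marcoux, Pike, arXiv:2204.01908).

At time 0 a fire breaks out at the set `F` of vertices and each firefighter is placed on
(protects) a vertex not in `F`.  At each subsequent time step the fire spreads to every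
unburnt, unprotected neighbour of a burning vertex, and then each firefighter moves to a
vertex at distance at most `d` from its current vertex in the subgraph induced by the
unburnt vertices (i.e. along a walk of length ≤ `d` through unburnt vertices).
Occupied vertices are protected forever.  The fire is contained if the burnt set
stabilizes after finitely many steps. -/

namespace Firefight

variable {V : Type*}

/-- The ordinary (unrestricted) firefighter game: on each turn the `k` firefighters may
protect any `k` unburnt vertices (protecting an already protected vertex wastes a move,
so this also allows protecting fewer). -/
def CanContainFree (G : SimpleGraph V) (k : ℕ) (F : Set V) : Prop :=
  ∃ pos : ℕ → Fin k → V,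
    (∀ t i, pos t i ∉ burnt G F (protOf pos) t) ∧
    ∃ T, ∀ t, burnt G F (protOf pos) t ⊆ burnt G F (protOf pos) T

/-- The ordinary firefighter number `f(G,u)`. -/
noncomputable def ffNum (G : SimpleGraph V) (u : V) : ℕ :=
  sInf {k | CanContainFree G k {u}}

/-!
The graph is the spider with `N + 1` infinite legs, with the fire at its centre.  In the
ordinary game one firefighter suffices: at time `j` it protects the vertex at depth `j` on
leg `j`, just ahead of the fire.  In the restricted game the centre burns at once, so no
firefighter can ever leave the leg it starts on; with at most `N` firefighters some leg is
unguarded and the fire runs down it forever, whereas `N + 1` firefighters placed next to the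
centre contain it immediately.  Thus `f = 1` and `f_d = N + 1`.
-/

lemma burnt_mono_s16 (G : SimpleGraph V) (F : Set V) (prot : ℕ → Set V) :
    Monotone (burnt G F prot) :=
  monotone_nat_of_le_succ fun _ => Set.subset_union_left

lemma subset_burnt (G : SimpleGraph V) (F : Set V) (prot : ℕ → Set V) (t : ℕ) :
    F ⊆ burnt G F prot t :=
  burnt_mono_s16 G F prot t.zero_le

section Spider

variable {ι : Type*}

/-- Adjacency of the spider on `Option (ι × ℕ)`: `none` is the centre and `some (i, n)` is
the vertex at depth `n` on leg `i`. -/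
def spiderAdj : Option (ι × ℕ) → Option (ι × ℕ) → Prop
  | none, none => False
  | none, some (_, n) | some (_, n), none => n = 0
  | some (i, n), some (j, m) => i = j ∧ (m = n + 1 ∨ n = m + 1)

def spider (ι : Type*) : SimpleGraph (Option (ι × ℕ)) where
  Adj := spiderAdj
  symm := ⟨by rintro (_ | ⟨i, n⟩) (_ | ⟨j, m⟩) h <;> simp only [spiderAdj] at * <;> tauto⟩
  loopless := ⟨by rintro (_ | ⟨i, n⟩) h <;> simp [spiderAdj] at h⟩

@[simp] lemma spider_adj_none_some {i : ι} {n : ℕ} :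
    (spider ι).Adj none (some (i, n)) ↔ n = 0 := Iff.rfl

@[simp] lemma spider_adj_some_some {i j : ι} {n m : ℕ} :
    (spider ι).Adj (some (i, n)) (some (j, m)) ↔ i = j ∧ (m = n + 1 ∨ n = m + 1) := Iff.rfl

lemma exists_eq_some_of_walk_of_none_notMem {a b : Option (ι × ℕ)} (p : (spider ι).Walk a b)
    (hp : none ∉ p.support) {i : ι} {n : ℕ} (ha : a = some (i, n)) : ∃ m, b = some (i, m) := by
  induction p generalizing n with
  | nil => exact ⟨n, ha⟩
  | @cons _ v _ hadj p ih =>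
    subst ha
    rcases v with _ | ⟨j, m⟩
    · simp at hp
    · rw [spider_adj_some_some] at hadj
      exact ih (fun h => hp (List.mem_cons_of_mem _ h)) (by rw [hadj.1])

variable (prot : ℕ → Set (Option (ι × ℕ)))

lemma lt_of_some_mem_burnt_spider {t : ℕ} {i : ι} {n : ℕ}
    (h : some (i, n) ∈ burnt (spider ι) {none} prot t) : n < t := by
  induction t generalizing i n with
  | zero => simp [burnt] at h
  | succ t ih =>
    rcases h with h | ⟨-, _ | ⟨j, m⟩, hw, hadj⟩
    · exact (ih h).trans t.lt_succ_self
    · rw [spider_adj_none_some] at hadj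
      omega
    · rw [spider_adj_some_some] at hadj
      have := ih hw
      omega

lemma some_mem_burnt_spider_of_forall_notMem {r : ι} {n : ℕ}
    (h : ∀ m ≤ n, some (r, m) ∉ prot m) :
    some (r, n) ∈ burnt (spider ι) {none} prot (n + 1) := by
  induction n with
  | zero => exact Or.inr ⟨h 0 le_rfl, none, rfl, rfl⟩
  | succ n ih =>
    exact Or.inr ⟨h (n + 1) le_rfl, some (r, n), ih fun m hm => h m (hm.trans n.le_succ),
      rfl, Or.inl rfl⟩

lemma not_burnt_stabilizes_of_unguarded_leg (r : ι) (h : ∀ m, some (r, m) ∉ prot m) :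
    ¬ ∃ T, ∀ t, burnt (spider ι) {none} prot t ⊆ burnt (spider ι) {none} prot T := by
  rintro ⟨T, hT⟩
  have hburnt := hT (T + 1) (some_mem_burnt_spider_of_forall_notMem prot fun m _ => h m)
  exact (lt_of_some_mem_burnt_spider prot hburnt).false

lemma not_canContainFree_spider_zero [Nonempty ι] : ¬ CanContainFree (spider ι) 0 {none} :=
  fun ⟨_, _, hT⟩ => not_burnt_stabilizes_of_unguarded_leg _ (Classical.arbitrary ι)
    (by rintro _ ⟨_, _, i, _⟩; exact i.elim0) hT

end Spider

section Restricted

variable {ι : Type*} [Fintype ι] {d : ℕ}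

lemma canContain_spider : CanContain (spider ι) d (Fintype.card ι) {none} := by
  let pos : ℕ → Fin (Fintype.card ι) → Option (ι × ℕ) :=
    fun _ i => some ((Fintype.equivFin ι).symm i, 0)
  have hburnt : ∀ t, burnt (spider ι) {none} (protOf pos) t = {none} := by
    intro t
    induction t with
    | zero => rfl
    | succ t ih =>
      refine (Set.union_subset_iff.2 ⟨ih.subset, ?_⟩).antisymm
        (subset_burnt (spider ι) {none} (protOf pos) (t + 1))
      rintro (_ | ⟨j, m⟩) ⟨hprot, w, hw, hadj⟩
      · rfl
      · rw [ih, Set.mem_singleton_iff] at hw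
        subst hw
        rw [spider_adj_none_some] at hadj
        subst hadj
        exact absurd ⟨0, t.zero_le, Fintype.equivFin ι j, by simp [pos]⟩ hprot
  refine ⟨0, pos, fun i => Option.some_ne_none _, fun t i => ?_, fun t => by rw [hburnt, hburnt]⟩
  refine ⟨.nil, d.zero_le, fun x hx => ?_⟩
  rw [SimpleGraph.Walk.support_nil, List.mem_singleton] at hx
  simp [hx, hburnt, pos]

lemma not_canContain_spider {k : ℕ} (hk : k < Fintype.card ι) :
    ¬ CanContain (spider ι) d k {none} := by
  rintro ⟨T, pos, hpos₀, hmove, hT⟩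
  have hstart : ∀ i, ∃ r m, pos 0 i = some (r, m) := fun i => by
    rcases h : pos 0 i with _ | ⟨r, m⟩
    · exact absurd (h ▸ rfl) (hpos₀ i)
    · exact ⟨r, m, rfl⟩
  choose leg depth hleg using hstart
  -- The centre is burnt from the start, so every move stays on one leg.
  have hstay : ∀ t i, ∃ m, pos t i = some (leg i, m) := by
    intro t i
    induction t with
    | zero => exact ⟨depth i, hleg i⟩
    | succ t ih =>
      obtain ⟨m, hm⟩ := ih
      obtain ⟨p, -, hp⟩ := hmove t i
      exact exists_eq_some_of_walk_of_none_notMem p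
        (fun h => hp none h (subset_burnt _ _ _ _ rfl)) hm
  obtain ⟨r, hr⟩ : ∃ r, ∀ i, leg i ≠ r := by
    by_contra! h
    exact hk.not_ge ((Fintype.card_le_of_surjective leg h).trans_eq (Fintype.card_fin k))
  refine not_burnt_stabilizes_of_unguarded_leg _ r ?_ ⟨T, hT⟩
  rintro m ⟨s, -, i, hi⟩
  obtain ⟨m', hm'⟩ := hstay s i
  rw [hm', Option.some.injEq, Prod.mk.injEq] at hi
  exact hr i hi.1

lemma fdNum_spider : fdNum (spider ι) d none = Fintype.card ι :=
  (Nat.sInf_le canContain_spider).antisymm <|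
    le_csInf ⟨_, canContain_spider⟩ fun _ hk => not_lt.1 fun h => not_canContain_spider h hk

end Restricted

section Free

variable {n : ℕ}

def freeStrategy (n : ℕ) : ℕ → Fin 1 → Option (Fin (n + 1) × ℕ) :=
  fun t _ => some (⟨min t n, Nat.lt_succ_of_le (min_le_right t n)⟩, min t n)

lemma mem_protOf_freeStrategy {t : ℕ} {v : Option (Fin (n + 1) × ℕ)} :
    v ∈ protOf (freeStrategy n) t ↔ ∃ j : Fin (n + 1), j.val ≤ t ∧ v = some (j, j.val) := by
  constructor
  · rintro ⟨s, hs, -, rfl⟩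
    exact ⟨_, (min_le_left s n).trans hs, rfl⟩
  · rintro ⟨j, hj, rfl⟩
    refine ⟨j, hj, 0, ?_⟩
    simp [freeStrategy, min_eq_left (Nat.le_of_lt_succ j.isLt)]

lemma mem_burnt_freeStrategy {t : ℕ} {v : Option (Fin (n + 1) × ℕ)}
    (hv : v ∈ burnt (spider (Fin (n + 1))) {none} (protOf (freeStrategy n)) t) :
    v = none ∨ ∃ i : Fin (n + 1), ∃ m, v = some (i, m) ∧ m < i.val ∧ m < t := by
  induction t generalizing v with
  | zero => exact Or.inl hv
  | succ t ih =>
    rcases hv with hv | ⟨hprot, w, hw, hadj⟩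
    · rcases ih hv with h | ⟨i, m, rfl, hi, ht⟩
      · exact Or.inl h
      · exact Or.inr ⟨i, m, rfl, hi, ht.trans t.lt_succ_self⟩
    rw [mem_protOf_freeStrategy] at hprot
    rcases v with _ | ⟨j, m⟩
    · exact Or.inl rfl
    refine Or.inr ⟨j, m, rfl, ?_⟩
    rcases ih hw with rfl | ⟨i, l, rfl, hi, ht⟩
    · rw [spider_adj_none_some] at hadj
      subst hadj
      refine ⟨Nat.pos_of_ne_zero fun hj => hprot ⟨j, by omega, by rw [hj]⟩, t.succ_pos⟩
    · obtain ⟨rfl, rfl | hl⟩ := hadj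
      · exact ⟨lt_of_le_of_ne hi fun hj => hprot ⟨i, by omega, by rw [hj]⟩, by omega⟩
      · omega

lemma canContainFree_spider_one : CanContainFree (spider (Fin (n + 1))) 1 {none} := by
  refine ⟨freeStrategy n, fun t i hburnt => ?_, n + 1, fun t v hv => ?_⟩
  · rcases mem_burnt_freeStrategy hburnt with h | ⟨j, m, h, hj, -⟩
    · exact Option.some_ne_none _ h
    · simp only [freeStrategy, Option.some.injEq, Prod.mk.injEq, Fin.ext_iff] at h
      omega
  · rcases mem_burnt_freeStrategy hv with rfl | ⟨i, m, rfl, hi, -⟩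
    · exact subset_burnt _ _ _ _ rfl
    refine burnt_mono_s16 _ _ _ (by omega : m + 1 ≤ n + 1)
      (some_mem_burnt_spider_of_forall_notMem _ fun l hl hprot => ?_)
    obtain ⟨j, -, hj⟩ := mem_protOf_freeStrategy.1 hprot
    simp only [Option.some.injEq, Prod.mk.injEq] at hj
    obtain ⟨rfl, rfl⟩ := hj
    omega

lemma ffNum_spider : ffNum (spider (Fin (n + 1))) none = 1 :=
  (Nat.sInf_le canContainFree_spider_one).antisymm <| Nat.one_le_iff_ne_zero.2 fun h =>
    not_canContainFree_spider_zero (h ▸ Nat.sInf_mem ⟨1, canContainFree_spider_one⟩)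

end Free

/-- For every `d ≥ 1` and every positive integer `N`, there exist a graph `G` and a vertex
`u` such that both the difference `f_d(G,u) − f(G,u)` and the ratio `f_d(G,u) / f(G,u)` are
at least `N`: the gap between the distance-restricted and the ordinary firefighter numbers
can be arbitrarily large for any fixed `d`. -/
theorem restricted_vs_ordinary_gap_unbounded :
    ∀ d : ℕ, 1 ≤ d → ∀ N : ℕ, 0 < N →
      ∃ (V : Type) (G : SimpleGraph V) (u : V),
        0 < ffNum G u ∧
        N ≤ fdNum G d u - ffNum G u ∧
        N * ffNum G u ≤ fdNum G d u := by
  intro d _ N _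
  refine ⟨_, spider (Fin (N + 1)), none, ?_⟩
  rw [ffNum_spider, fdNum_spider, Fintype.card_fin]
  omega

end Firefight
end

section
/- For every integer n ≥ 3, every vertex v of the Cartesian product of the two-way infinite path and the n-cycle, and every vertex w of the infinite square grid, the subgraph induced by the set of vertices at graph distance at most ⌊(n−2)/2⌋ from v is isomorphic to the subgraph of the square grid induced by the set of vertices at graph distance at most ⌊(n−2)/2⌋ from w. -/
/-!
Reducing the second coordinate mod `n` (after a translation sending `w` to `v`) is a graph
homomorphism from the grid onto the cylinder `ℤ □ Cₙ` that lifts every edge at every vertex.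
Hence it does not increase distances, and every walk starting at `v` lifts to a walk of the same
length starting at `w`, so it maps the `r`-ball about `w` onto the `r`-ball about `v`. Two points
of the grid ball differ by at most `2r ≤ n - 2` in the second coordinate, too little for the
reduction mod `n` to identify them or to create an edge between them.
-/

namespace Firefight

/-- The infinite square grid: vertex set `ℤ × ℤ`, with `(a,b)` adjacent to `(c,d)`
iff `|a-c| + |b-d| = 1`. -/
def sqGrid : SimpleGraph (ℤ × ℤ) :=
  SimpleGraph.fromRel (fun p q => |p.1 - q.1| + |p.2 - q.2| = 1)

/-- The two-way infinite path: vertex set `ℤ` with `i` adjacent to `i+1`. -/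
def intPath : SimpleGraph ℤ :=
  SimpleGraph.fromRel (fun i j => j = i + 1)

/-- The cycle on `m` vertices (for `m ≥ 3`): vertex set `ZMod m`, `i` adjacent to `i ± 1`. -/
def cycleGraph (m : ℕ) : SimpleGraph (ZMod m) :=
  SimpleGraph.fromRel (fun i j => j = i + 1)

end Firefight

namespace SimpleGraph

variable {V W : Type*} {G : SimpleGraph V} {H : SimpleGraph W}

theorem Hom.dist_map_le (f : G →g H) {u u' : V} (h : G.Reachable u u') :
    H.dist (f u) (f u') ≤ G.dist u u' := by
  obtain ⟨p, hp⟩ := h.exists_walk_length_eq_dist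
  calc H.dist (f u) (f u') ≤ (p.map f).length := dist_le _
    _ = G.dist u u' := by rw [Walk.length_map, hp]

def Hom.IsLocallySurjective (f : G →g H) : Prop :=
  ∀ ⦃u : V⦄ ⦃y : W⦄, H.Adj (f u) y → ∃ u', G.Adj u u' ∧ f u' = y

namespace Hom.IsLocallySurjective

variable {f : G →g H}

theorem exists_walk_lift (hf : f.IsLocallySurjective) {x y : W} (p : H.Walk x y) {u : V}
    (hu : f u = x) : ∃ u', f u' = y ∧ ∃ q : G.Walk u u', q.length = p.length := by
  induction p generalizing u with
  | nil => exact ⟨u, hu, .nil, rfl⟩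
  | cons hxz _ ih =>
    obtain ⟨u₁, hadj, rfl⟩ := hf (hu ▸ hxz)
    obtain ⟨u', hu', q, hq⟩ := ih rfl
    exact ⟨u', hu', .cons hadj q, by simp [hq]⟩

theorem exists_dist_le (hf : f.IsLocallySurjective) {u : V} {y : W} (h : H.Reachable (f u) y) :
    ∃ u', f u' = y ∧ G.dist u u' ≤ H.dist (f u) y := by
  obtain ⟨p, hp⟩ := h.exists_walk_length_eq_dist
  obtain ⟨u', hu', q, hq⟩ := hf.exists_walk_lift p rfl
  exact ⟨u', hu', (dist_le q).trans (hq.trans hp).le⟩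

/-- Connectedness matters since `dist` is `0` between mutually unreachable vertices. -/
theorem nonempty_induce_ball_iso (hf : f.IsLocallySurjective) (hG : G.Preconnected)
    (hH : H.Preconnected) (u : V) (r : ℕ)
    (hinj : Set.InjOn f {p | G.dist u p ≤ r})
    (hadj : ∀ ⦃p q⦄, G.dist u p ≤ r → G.dist u q ≤ r → H.Adj (f p) (f q) → G.Adj p q) :
    Nonempty (G.induce {p | G.dist u p ≤ r} ≃g H.induce {y | H.dist (f u) y ≤ r}) := by
  have hbij : Set.BijOn f {p | G.dist u p ≤ r} {y | H.dist (f u) y ≤ r} := by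
    refine ⟨fun p hp => (f.dist_map_le (hG u p)).trans hp, hinj, fun y hy => ?_⟩
    obtain ⟨p, rfl, hp⟩ := hf.exists_dist_le (hH (f u) y)
    exact ⟨p, hp.trans hy, rfl⟩
  exact ⟨⟨hbij.equiv, fun {p q} => ⟨hadj p.2 q.2, f.map_adj⟩⟩⟩

end Hom.IsLocallySurjective

theorem natAbs_sub_le_dist {g : V → ℤ} (hg : ∀ ⦃a b⦄, G.Adj a b → (g a - g b).natAbs ≤ 1)
    {u u' : V} (h : G.Reachable u u') : (g u - g u').natAbs ≤ G.dist u u' := by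
  obtain ⟨p, hp⟩ := h.exists_walk_length_eq_dist
  rw [← hp]
  clear hp h
  induction p with
  | nil => simp
  | cons hadj _ ih =>
    have := hg hadj
    rw [Walk.length_cons]
    omega

end SimpleGraph

namespace Firefight

open SimpleGraph

theorem intPath_adj {a b : ℤ} : intPath.Adj a b ↔ b = a + 1 ∨ a = b + 1 := by
  rw [intPath, fromRel_adj]
  omega

theorem cycleGraph_adj {n : ℕ} [Nontrivial (ZMod n)] {i j : ZMod n} :
    (cycleGraph n).Adj i j ↔ j = i + 1 ∨ i = j + 1 := by
  rw [cycleGraph, fromRel_adj, and_iff_right_iff_imp]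
  rintro (rfl | rfl) <;> simp

theorem sqGrid_eq_boxProd : sqGrid = intPath □ intPath := by
  ext p q
  rw [sqGrid, fromRel_adj, boxProd_adj, intPath_adj, intPath_adj, Ne, Prod.ext_iff]
  rcases p with ⟨a, b⟩
  rcases q with ⟨c, d⟩
  simp only
  rcases abs_cases (a - c) with h1 | h1 <;> rcases abs_cases (b - d) with h2 | h2 <;>
    rcases abs_cases (c - a) with h3 | h3 <;> rcases abs_cases (d - b) with h4 | h4 <;> omega

theorem sqGrid_adj {p q : ℤ × ℤ} :
    sqGrid.Adj p q ↔ (intPath.Adj p.1 q.1 ∧ p.2 = q.2) ∨ (intPath.Adj p.2 q.2 ∧ p.1 = q.1) := by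
  rw [sqGrid_eq_boxProd, boxProd_adj]

theorem intPath_eq_hasse : intPath = hasse ℤ := by
  ext a b
  rw [intPath_adj, hasse_adj, Order.covBy_iff_add_one_eq, Order.covBy_iff_add_one_eq]
  omega

theorem intPath_preconnected : intPath.Preconnected :=
  intPath_eq_hasse ▸ hasse_preconnected_of_succ ℤ

theorem eq_of_intCast_eq {n : ℕ} {a b : ℤ} (h : (a : ZMod n) = b) (hab : (a - b).natAbs < n) :
    a = b := by
  rw [ZMod.intCast_eq_intCast_iff_dvd_sub] at h
  have := Int.eq_zero_of_dvd_of_natAbs_lt_natAbs h (by omega)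
  omega

theorem sqGrid_preconnected : sqGrid.Preconnected :=
  sqGrid_eq_boxProd ▸ intPath_preconnected.boxProd intPath_preconnected

theorem natAbs_snd_sub_le_sqGrid_dist (p q : ℤ × ℤ) : (p.2 - q.2).natAbs ≤ sqGrid.dist p q := by
  refine natAbs_sub_le_dist (fun a b hab => ?_) (sqGrid_preconnected p q)
  rw [sqGrid_adj, intPath_adj, intPath_adj] at hab
  omega

section Cover

variable {n : ℕ} [Nontrivial (ZMod n)]

def cylinderCover (t : ℤ × ZMod n) : sqGrid →g intPath □ cycleGraph n where
  toFun p := (p.1 + t.1, p.2 + t.2)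
  map_rel' {p q} h := by
    rw [sqGrid_adj, intPath_adj, intPath_adj] at h
    rw [boxProd_adj, intPath_adj, cycleGraph_adj]
    rcases h with ⟨h1, h2⟩ | ⟨h1 | h1, h2⟩
    · exact .inl ⟨by dsimp only; omega, by dsimp only; rw [h2]⟩
    · exact .inr ⟨.inl (by dsimp only; rw [h1]; push_cast; ring), by dsimp only; rw [h2]⟩
    · exact .inr ⟨.inr (by dsimp only; rw [h1]; push_cast; ring), by dsimp only; rw [h2]⟩

@[simp]
theorem cylinderCover_apply (t : ℤ × ZMod n) (p : ℤ × ℤ) :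
    cylinderCover t p = (p.1 + t.1, p.2 + t.2) :=
  rfl

theorem cylinderCover_isLocallySurjective (t : ℤ × ZMod n) :
    (cylinderCover t).IsLocallySurjective := by
  rintro ⟨a, b⟩ ⟨c, z⟩ h
  simp only [cylinderCover_apply, boxProd_adj, intPath_adj, cycleGraph_adj] at h
  simp only [sqGrid_adj, intPath_adj, cylinderCover_apply, Prod.exists, Prod.mk.injEq]
  rcases h with ⟨h1, rfl⟩ | ⟨h1 | h1, rfl⟩
  · exact ⟨c - t.1, b, by omega, by ring, rfl⟩
  · exact ⟨a, b + 1, by omega, rfl, by rw [h1]; push_cast; ring⟩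
  · exact ⟨a, b - 1, by omega, rfl, by push_cast; linear_combination h1⟩

theorem eq_of_cylinderCover_eq {t : ℤ × ZMod n} {p q : ℤ × ℤ}
    (h : cylinderCover t p = cylinderCover t q) (hpq : (p.2 - q.2).natAbs < n) : p = q := by
  simp only [cylinderCover_apply, Prod.mk.injEq, add_left_inj] at h
  exact Prod.ext h.1 (eq_of_intCast_eq h.2 hpq)

theorem sqGrid_adj_of_cylinderCover_adj {t : ℤ × ZMod n} {p q : ℤ × ℤ}
    (h : (intPath □ cycleGraph n).Adj (cylinderCover t p) (cylinderCover t q))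
    (hpq : (p.2 - q.2).natAbs + 1 < n) : sqGrid.Adj p q := by
  simp only [cylinderCover_apply, boxProd_adj, intPath_adj, cycleGraph_adj, add_left_inj] at h
  rw [sqGrid_adj, intPath_adj, intPath_adj]
  rcases h with ⟨h1, h2⟩ | ⟨h1 | h1, h2⟩
  · have := eq_of_intCast_eq h2 (by omega)
    omega
  · have := eq_of_intCast_eq (a := q.2) (b := p.2 + 1)
      (by push_cast; linear_combination h1) (by omega)
    omega
  · have := eq_of_intCast_eq (a := p.2) (b := q.2 + 1)
      (by push_cast; linear_combination h1) (by omega)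
    omega

theorem cylinderCover_surjective (t : ℤ × ZMod n) : Function.Surjective (cylinderCover t) := by
  rintro ⟨a, z⟩
  obtain ⟨b, hb⟩ := ZMod.intCast_surjective (z - t.2)
  exact ⟨(a - t.1, b), by simp [hb]⟩

theorem cylinder_preconnected : (intPath □ cycleGraph n).Preconnected :=
  sqGrid_preconnected.map (cylinderCover 0) (cylinderCover_surjective 0)

end Cover

/-- For every `n ≥ 3`, every vertex `v` of `P_{-∞,∞} □ C_n` and every vertex `w` of the
square grid, the subgraph induced by the ball of radius `⌊(n-2)/2⌋` about `v` is isomorphic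
to the subgraph of the square grid induced by the ball of radius `⌊(n-2)/2⌋` about `w`. -/
theorem path_times_cycle_balls_iso :
    ∀ n : ℕ, 3 ≤ n → ∀ v : ℤ × ZMod n, ∀ w : ℤ × ℤ,
      Nonempty
        (((intPath.boxProd (cycleGraph n)).induce
            {x | (intPath.boxProd (cycleGraph n)).dist v x ≤ (n - 2) / 2}) ≃g
          (sqGrid.induce {y | sqGrid.dist w y ≤ (n - 2) / 2})) := by
  intro n hn v w
  have : Fact (1 < n) := ⟨by omega⟩
  let t : ℤ × ZMod n := (v.1 - w.1, v.2 - w.2)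
  have hw : cylinderCover t w = v := by simp [t]
  have hclose {p q : ℤ × ℤ} (hp : sqGrid.dist w p ≤ (n - 2) / 2)
      (hq : sqGrid.dist w q ≤ (n - 2) / 2) : (p.2 - q.2).natAbs + 1 < n := by
    have := (natAbs_snd_sub_le_sqGrid_dist p w).trans (dist_comm.trans_le hp)
    have := (natAbs_snd_sub_le_sqGrid_dist q w).trans (dist_comm.trans_le hq)
    omega
  obtain ⟨e⟩ := (cylinderCover_isLocallySurjective t).nonempty_induce_ball_iso
    sqGrid_preconnected cylinder_preconnected w ((n - 2) / 2)
    (fun p hp q hq h => eq_of_cylinderCover_eq h (Nat.lt_of_succ_lt (hclose hp hq)))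
    (fun p q hp hq h => sqGrid_adj_of_cylinderCover_adj h (hclose hp hq))
  rw [hw] at e
  exact ⟨e.symm⟩

end Firefight
end
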